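/- arXiv:2303.05876 — 4 statements merged into one kernel-verified Lean document; each statement's English description precedes it below -/
import Mathlib

section
/- Let T be a finite tree with set of leaf vertices A, and let B be a set of edges of T that separates A (i.e., for every pair of distinct leaves i, j in A, every path in T from i to j contains an edge of B). Then |B| ≥ |A| - 1. -/
open SimpleGraph

universe u
variable {V : Type u}

lemma aux_claim (H : SimpleGraph V) (x y : V) {u v : V} (p : H.Walk u v) :
    (H.deleteEdges {s(x,y)}).Reachable u v ∨
      (((H.deleteEdges {s(x,y)}).Reachable u x ∨ (H.deleteEdges {s(x,y)}).Reachable u y) ∧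
       ((H.deleteEdges {s(x,y)}).Reachable v x ∨ (H.deleteEdges {s(x,y)}).Reachable v y)) := by
  set H' := H.deleteEdges {s(x,y)} with hH'
  induction p with
  | nil => exact Or.inl (Reachable.refl _)
  | @cons a b c h q ih =>
    by_cases he : s(a, b) = s(x, y)
    · rw [Sym2.eq_iff] at he
      have ha : H'.Reachable a x ∨ H'.Reachable a y := by
        rcases he with ⟨h1, _⟩ | ⟨h1, _⟩
        · exact Or.inl (h1 ▸ Reachable.refl _)
        · exact Or.inr (h1 ▸ Reachable.refl _)
      have hb : H'.Reachable b x ∨ H'.Reachable b y := by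
        rcases he with ⟨_, h2⟩ | ⟨_, h2⟩
        · exact Or.inr (h2 ▸ Reachable.refl _)
        · exact Or.inl (h2 ▸ Reachable.refl _)
      refine Or.inr ⟨ha, ?_⟩
      rcases ih with hcv | ⟨_, hc⟩
      · rcases hb with hb | hb
        · exact Or.inl (hcv.symm.trans hb)
        · exact Or.inr (hcv.symm.trans hb)
      · exact hc
    · have hab : H'.Adj a b := by
        rw [hH', deleteEdges_adj]
        exact ⟨h, by simpa using he⟩
      rcases ih with hcv | ⟨hb, hc⟩
      · exact Or.inl (hab.reachable.trans hcv)
      · refine Or.inr ⟨?_, hc⟩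
        rcases hb with hb | hb
        · exact Or.inl (hab.reachable.trans hb)
        · exact Or.inr (hab.reachable.trans hb)

lemma card_cc_delete_single [Finite V] (H : SimpleGraph V) (e : Sym2 V) :
    Nat.card (H.deleteEdges {e}).ConnectedComponent ≤ Nat.card H.ConnectedComponent + 1 := by
  classical
  induction e with
  | _ x y =>
    set H' := H.deleteEdges {s(x,y)} with hH'
    haveI : Finite H.ConnectedComponent :=
      Finite.of_surjective H.connectedComponentMk
        (fun c => ConnectedComponent.ind (fun v => ⟨v, rfl⟩) c)
    let φ : H'.ConnectedComponent → H.ConnectedComponent :=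
      ConnectedComponent.map (Hom.ofLE (H.deleteEdges_le _))
    let g : H'.ConnectedComponent → H.ConnectedComponent ⊕ PUnit.{u+1} := fun c =>
      if c = H'.connectedComponentMk x then Sum.inr PUnit.unit else Sum.inl (φ c)
    have hg : Function.Injective g := by
      intro c1 c2 hgeq
      by_cases h1 : c1 = H'.connectedComponentMk x <;>
        by_cases h2 : c2 = H'.connectedComponentMk x <;>
        simp [g, h1, h2] at hgeq
      · exact h1.trans h2.symm
      · -- φ c1 = φ c2, c1 c2 ≠ mk x
        revert h1 h2 hgeq
        refine ConnectedComponent.ind₂ (fun u v h1 h2 hgeq => ?_) c1 c2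
        have hr : H.Reachable u v := by
          have := hgeq
          simp only [φ, ConnectedComponent.map_mk, Hom.ofLE_apply] at this
          exact ConnectedComponent.eq.mp this
        obtain ⟨p⟩ := hr
        rcases aux_claim H x y p with hp | ⟨hu, hv⟩
        · exact ConnectedComponent.eq.mpr hp
        · rcases hu with hu | hu
          · exact absurd (ConnectedComponent.eq.mpr hu) h1
          · rcases hv with hv | hv
            · exact absurd (ConnectedComponent.eq.mpr hv) h2
            · exact (ConnectedComponent.eq.mpr hu).trans (ConnectedComponent.eq.mpr hv).symm
    calc Nat.card H'.ConnectedComponent ≤ Nat.card (H.ConnectedComponent ⊕ PUnit.{u+1}) :=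
          Nat.card_le_card_of_injective g hg
      _ = Nat.card H.ConnectedComponent + 1 := by
          simp [Nat.card_sum]

lemma card_cc_delete [Finite V] (H : SimpleGraph V) (B : Finset (Sym2 V)) :
    Nat.card (H.deleteEdges ↑B).ConnectedComponent ≤ Nat.card H.ConnectedComponent + B.card := by
  classical
  induction B using Finset.induction with
  | empty => simp
  | @insert e B' he ih =>
    have hrw : (H.deleteEdges ↑(insert e B')) = (H.deleteEdges ↑B').deleteEdges {e} := by
      rw [deleteEdges_deleteEdges, Finset.coe_insert, Set.insert_eq, Set.union_comm]
    rw [hrw, Finset.card_insert_of_notMem he]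
    calc Nat.card ((H.deleteEdges ↑B').deleteEdges {e}).ConnectedComponent
        ≤ Nat.card (H.deleteEdges ↑B').ConnectedComponent + 1 :=
          card_cc_delete_single _ e
      _ ≤ Nat.card H.ConnectedComponent + B'.card + 1 := by omega
      _ = Nat.card H.ConnectedComponent + (B'.card + 1) := by omega

/-- If B is a set of edges of a finite tree T separating the set A of leaves
(every path between two distinct leaves uses an edge of B), then |B| ≥ |A| - 1. -/
theorem stmt_3 {V : Type*} [Fintype V] [DecidableEq V] (G : SimpleGraph V)
    [DecidableRel G.Adj] (hT : G.IsTree)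
    (B : Finset (Sym2 V)) (hBE : B ⊆ G.edgeFinset)
    (hsep : ∀ i j : V, G.degree i = 1 → G.degree j = 1 → i ≠ j →
      ∀ p : G.Walk i j, ∃ e ∈ B, e ∈ p.edges) :
    (Finset.univ.filter fun v => G.degree v = 1).card - 1 ≤ B.card := by
  classical
  set A := Finset.univ.filter fun v => G.degree v = 1 with hA
  set G' := G.deleteEdges ↑B with hG'
  -- injective map from leaves to components of G'
  have hinj : Function.Injective (fun v : {v // v ∈ A} => G'.connectedComponentMk v.1) := by
    rintro ⟨u, hu⟩ ⟨v, hv⟩ heq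
    simp only at heq
    by_contra hne
    have hne' : u ≠ v := by simpa using fun h => hne (Subtype.ext h)
    obtain ⟨p⟩ := ConnectedComponent.eq.mp heq
    have hp : ∀ e ∈ p.edges, e ∈ G.edgeSet := fun e hep =>
      (edgeSet_mono (G.deleteEdges_le _)) (p.edges_subset_edgeSet hep)
    have hdu : G.degree u = 1 := by simpa [hA] using hu
    have hdv : G.degree v = 1 := by simpa [hA] using hv
    obtain ⟨e, heB, hee⟩ := hsep u v hdu hdv hne' (p.transfer G hp)
    rw [Walk.edges_transfer] at hee
    have : e ∈ G'.edgeSet := p.edges_subset_edgeSet hee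
    rw [hG', edgeSet_deleteEdges] at this
    exact this.2 heB
  have h1 : A.card ≤ Nat.card G'.ConnectedComponent := by
    have := Nat.card_le_card_of_injective _ hinj
    simpa [Nat.card_eq_fintype_card] using this
  have h2 : Nat.card G.ConnectedComponent = 1 := by
    have hconn := hT.isConnected
    rw [Nat.card_eq_one_iff_unique]
    constructor
    · constructor
      refine ConnectedComponent.ind₂ (fun u v => ?_)
      exact ConnectedComponent.eq.mpr (hconn.preconnected u v)
    · exact ⟨G.connectedComponentMk hconn.nonempty.some⟩
  have h3 : Nat.card G'.ConnectedComponent ≤ Nat.card G.ConnectedComponent + B.card :=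
    card_cc_delete G B
  omega
end

section
/- Let T be a finite tree with set of leaves A, and let B be a set of edges of T separating A with |B| = |A| - 1. Then for each edge e in B there exists a unique (unordered) pair of leaves i, j in A such that B separates i from j but B \ {e} does not separate i from j. -/
open SimpleGraph

/-- Key reachability lemma: if a walk in `H` uses edges from `D` only if they equal `s(u,v)`,
then its endpoints are reachable in `H.deleteEdges D`, possibly via the pair `u, v`. -/
lemma stmt5_reach_aux {V : Type*} (H : SimpleGraph V) (D : Set (Sym2 V)) (u v : V) :
    ∀ {x y : V} (w : H.Walk x y), (∀ f ∈ w.edges, f ∈ D → f = s(u,v)) →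
    (H.deleteEdges D).Reachable x y ∨
    ((H.deleteEdges D).Reachable x u ∧ (H.deleteEdges D).Reachable v y) ∨
    ((H.deleteEdges D).Reachable x v ∧ (H.deleteEdges D).Reachable u y) := by
  intro x y w
  induction w with
  | nil => exact fun _ => Or.inl (Reachable.refl _)
  | @cons a b c h w ih =>
    intro hw
    have hw' : ∀ f ∈ w.edges, f ∈ D → f = s(u,v) := by
      intro f hf; exact hw f (by simp [hf])
    have hih := ih hw'
    by_cases hD : s(a, b) ∈ D
    · have heq : s(a, b) = s(u, v) := hw _ (by simp) hD
      rw [Sym2.eq_iff] at heq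
      rcases heq with ⟨rfl, rfl⟩ | ⟨rfl, rfl⟩
      · rcases hih with hr | ⟨h1, h2⟩ | ⟨h1, h2⟩
        · exact Or.inr (Or.inl ⟨Reachable.refl _, hr⟩)
        · exact Or.inr (Or.inl ⟨Reachable.refl _, h2⟩)
        · exact Or.inl h2
      · rcases hih with hr | ⟨h1, h2⟩ | ⟨h1, h2⟩
        · exact Or.inr (Or.inr ⟨Reachable.refl _, hr⟩)
        · exact Or.inl h2
        · exact Or.inr (Or.inr ⟨Reachable.refl _, h2⟩)
    · have hadj : (H.deleteEdges D).Adj a b := by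
        rw [SimpleGraph.deleteEdges_adj]; exact ⟨h, hD⟩
      have hr : (H.deleteEdges D).Reachable a b := hadj.reachable
      rcases hih with hih | ⟨h1, h2⟩ | ⟨h1, h2⟩
      · exact Or.inl (hr.trans hih)
      · exact Or.inr (Or.inl ⟨hr.trans h1, h2⟩)
      · exact Or.inr (Or.inr ⟨hr.trans h1, h2⟩)

/-- Deleting one edge increases the number of connected components by at most one. -/
lemma stmt5_card_step {V : Type*} [Finite V] (H : SimpleGraph V) (e : Sym2 V) :
    Nat.card (H.deleteEdges {e}).ConnectedComponent ≤ Nat.card H.ConnectedComponent + 1 := by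
  induction e using Sym2.ind with
  | _ u v =>
    classical
    let ψ : (H.deleteEdges {s(u,v)}).ConnectedComponent → H.ConnectedComponent :=
      SimpleGraph.ConnectedComponent.map (SimpleGraph.Hom.ofLE
        (SimpleGraph.deleteEdges_le _))
    let f : (H.deleteEdges {s(u,v)}).ConnectedComponent → H.ConnectedComponent ⊕ Unit :=
      fun C => if C = (H.deleteEdges {s(u,v)}).connectedComponentMk v then Sum.inr () else
        Sum.inl (ψ C)
    have hf : Function.Injective f := by
      intro C C' hCC'
      by_cases h1 : C = (H.deleteEdges {s(u,v)}).connectedComponentMk v <;>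
        by_cases h2 : C' = (H.deleteEdges {s(u,v)}).connectedComponentMk v
      · exact h1.trans h2.symm
      · simp only [f, if_pos h1, if_neg h2] at hCC'
        exact absurd hCC' (by simp)
      · simp only [f, if_neg h1, if_pos h2] at hCC'
        exact absurd hCC' (by simp)
      · -- both mapped by psi
        simp only [f, if_neg h1, if_neg h2, Sum.inl.injEq] at hCC'
        revert h1 h2 hCC'
        refine SimpleGraph.ConnectedComponent.ind₂ ?_ C C'
        intro x y h1 h2 hCC'
        have hr : H.Reachable x y := by
          have := SimpleGraph.ConnectedComponent.eq.mp hCC'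
          exact this
        obtain ⟨w⟩ := hr
        have := stmt5_reach_aux H {s(u,v)} u v w (by intro f _ hf; simpa using hf)
        rcases this with hr' | ⟨ha, hb⟩ | ⟨ha, hb⟩
        · exact SimpleGraph.ConnectedComponent.sound hr'
        · exact absurd (SimpleGraph.ConnectedComponent.sound hb.symm) h2
        · exact absurd (SimpleGraph.ConnectedComponent.sound ha) h1
    calc Nat.card (H.deleteEdges {s(u,v)}).ConnectedComponent
        ≤ Nat.card (H.ConnectedComponent ⊕ Unit) := Nat.card_le_card_of_injective f hf
      _ = Nat.card H.ConnectedComponent + 1 := by rw [Nat.card_sum]; simp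

lemma stmt5_card_le {V : Type*} [Finite V] (H : SimpleGraph V) (B : Finset (Sym2 V)) :
    Nat.card (H.deleteEdges ↑B).ConnectedComponent ≤ Nat.card H.ConnectedComponent + B.card := by
  classical
  induction B using Finset.induction_on generalizing H with
  | empty => simp
  | @insert e S he ih =>
    have : (H.deleteEdges ↑(insert e S)) = (H.deleteEdges {e}).deleteEdges ↑S := by
      rw [SimpleGraph.deleteEdges_deleteEdges]
      congr 1
      simp [Set.union_comm]
    rw [this, Finset.card_insert_of_notMem he]
    calc Nat.card ((H.deleteEdges {e}).deleteEdges ↑S).ConnectedComponent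
        ≤ Nat.card (H.deleteEdges {e}).ConnectedComponent + S.card := ih _
      _ ≤ Nat.card H.ConnectedComponent + 1 + S.card := by
          have := stmt5_card_step H e; omega
      _ = Nat.card H.ConnectedComponent + (S.card + 1) := by omega

/-- If B separates the leaf set A of a finite tree T and |B| = |A| - 1, then
every edge e ∈ B critically separates a unique (unordered) pair of leaves:
B separates them but B \ {e} does not. -/
theorem stmt_5 {V : Type*} [Fintype V] [DecidableEq V] (G : SimpleGraph V)
    [DecidableRel G.Adj] (hT : G.IsTree)
    (B : Finset (Sym2 V)) (hBE : B ⊆ G.edgeFinset)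
    (hsep : ∀ i j : V, G.degree i = 1 → G.degree j = 1 → i ≠ j →
      ∀ p : G.Walk i j, ∃ e ∈ B, e ∈ p.edges)
    (hcard : B.card = (Finset.univ.filter fun v => G.degree v = 1).card - 1) :
    ∀ e ∈ B, ∃! s : Sym2 V, ∃ i j : V, s = s(i, j) ∧
      G.degree i = 1 ∧ G.degree j = 1 ∧ i ≠ j ∧
      (∀ p : G.Walk i j, ∃ f ∈ B, f ∈ p.edges) ∧
      ¬ (∀ p : G.Walk i j, ∃ f ∈ B.erase e, f ∈ p.edges) := by
  classical
  intro e he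
  set G' := G.deleteEdges ↑B with hG'
  -- edges of G'-walks avoid B and lie in G
  have hGle : G' ≤ G := SimpleGraph.deleteEdges_le _
  have hedges : ∀ {a b : V} (w : G'.Walk a b), ∀ f ∈ w.edges, f ∈ G.edgeSet ∧ f ∉ B := by
    intro a b w f hf
    have := w.edges_subset_edgeSet hf
    rw [hG', SimpleGraph.edgeSet_deleteEdges] at this
    exact ⟨this.1, by simpa using this.2⟩
  have htrans : ∀ {a b : V}, G'.Reachable a b → ∃ p : G.Walk a b, ∀ f ∈ p.edges, f ∉ B := by
    intro a b hr
    obtain ⟨w⟩ := hr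
    refine ⟨w.transfer G (fun f hf => (hedges w f hf).1), ?_⟩
    intro f hf
    rw [SimpleGraph.Walk.edges_transfer] at hf
    exact (hedges w f hf).2
  have hinj : ∀ i j : V, G.degree i = 1 → G.degree j = 1 → G'.Reachable i j → i = j := by
    intro i j hi hj hr
    by_contra hne
    obtain ⟨p, hp⟩ := htrans hr
    obtain ⟨f, hfB, hfp⟩ := hsep i j hi hj hne p
    exact hp f hfp hfB
  set A := (Finset.univ.filter fun v => G.degree v = 1) with hA
  let φ : {v : V // G.degree v = 1} → G'.ConnectedComponent :=
    fun a => G'.connectedComponentMk a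
  have hφinj : Function.Injective φ := by
    intro a b hab
    exact Subtype.ext (hinj _ _ a.2 b.2 (SimpleGraph.ConnectedComponent.eq.mp hab))
  have hcardL : Nat.card {v : V // G.degree v = 1} = A.card := by
    rw [Nat.card_eq_fintype_card, Fintype.card_subtype]
  have hAB : A.card = B.card + 1 := by
    have h1 : 0 < B.card := Finset.card_pos.mpr ⟨e, he⟩
    rw [hA] at hcard ⊢
    omega
  have hcomp1 : Nat.card G.ConnectedComponent = 1 := by
    have hconn := hT.isConnected
    have : Subsingleton G.ConnectedComponent := by
      constructor
      refine SimpleGraph.ConnectedComponent.ind₂ ?_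
      intro x y
      exact SimpleGraph.ConnectedComponent.sound (hconn.preconnected x y)
    have : Nonempty G.ConnectedComponent := by
      obtain ⟨x⟩ := hconn.nonempty
      exact ⟨G.connectedComponentMk x⟩
    exact Nat.card_unique
  have hle : Nat.card G'.ConnectedComponent ≤ A.card := by
    calc Nat.card G'.ConnectedComponent ≤ Nat.card G.ConnectedComponent + B.card :=
          stmt5_card_le G B
      _ = A.card := by rw [hcomp1]; omega
  have hbij : Function.Bijective φ := by
    rw [Nat.bijective_iff_injective_and_card]
    refine ⟨hφinj, le_antisymm (Nat.card_le_card_of_injective φ hφinj) ?_⟩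
    rw [hcardL]; exact hle
  revert he
  induction e using Sym2.ind with
  | _ u v =>
  intro he
  have hadj : G.Adj u v := by
    have := hBE he
    rwa [SimpleGraph.mem_edgeFinset, SimpleGraph.mem_edgeSet] at this
  -- u and v are not G'-reachable (e is a bridge)
  have hbridge : ¬ (G.deleteEdges {s(u,v)}).Reachable u v := by
    have hacyc := hT.IsAcyclic
    rw [SimpleGraph.isAcyclic_iff_forall_edge_isBridge] at hacyc
    have := hacyc (G.mem_edgeSet.mpr hadj)
    rw [SimpleGraph.isBridge_iff] at this
    exact this
  have hnr : ¬ G'.Reachable u v := by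
    intro hr
    exact hbridge (hr.mono (SimpleGraph.deleteEdges_anti (by simp [he])))
  -- leaves in the components of u and v
  obtain ⟨i, hi⟩ := hbij.2 (G'.connectedComponentMk u)
  obtain ⟨j, hj⟩ := hbij.2 (G'.connectedComponentMk v)
  have hiu : G'.Reachable (i : V) u := SimpleGraph.ConnectedComponent.eq.mp hi
  have hjv : G'.Reachable (j : V) v := SimpleGraph.ConnectedComponent.eq.mp hj
  have hij : (i : V) ≠ (j : V) := by
    intro hij
    exact hnr (hiu.symm.trans (hij ▸ hjv))
  refine ⟨s((i : V), (j : V)), ⟨i, j, rfl, i.2, j.2, hij, fun p => hsep i j i.2 j.2 hij p, ?_⟩, ?_⟩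
  · -- B \ {e} does not separate i and j
    push_neg
    obtain ⟨w1⟩ := hiu
    obtain ⟨w2⟩ := hjv
    refine ⟨((w1.transfer G (fun f hf => (hedges w1 f hf).1)).append
      (SimpleGraph.Walk.cons hadj ((w2.transfer G (fun f hf => (hedges w2 f hf).1)).reverse))),
      ?_⟩
    intro f hf
    simp only [SimpleGraph.Walk.edges_append, SimpleGraph.Walk.edges_cons,
      SimpleGraph.Walk.edges_reverse, SimpleGraph.Walk.edges_transfer,
      List.mem_append, List.mem_cons, List.mem_reverse] at *
    intro hmem
    have hfB : f ∈ B := Finset.mem_of_mem_erase hf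
    have hfe : f ≠ s(u, v) := Finset.ne_of_mem_erase hf
    rcases hmem with h1 | h2 | h3
    · exact (hedges w1 f h1).2 hfB
    · exact hfe h2
    · exact (hedges w2 f h3).2 hfB
  · -- uniqueness
    rintro s' ⟨i', j', rfl, hdi', hdj', hne', hsep', hnot'⟩
    push_neg at hnot'
    obtain ⟨p0, hp0⟩ := hnot'
    have hcond : ∀ f ∈ p0.edges, f ∈ (↑B : Set (Sym2 V)) → f = s(u, v) := by
      intro f hf hfB
      by_contra hfe
      exact hp0 f (Finset.mem_erase.mpr ⟨hfe, by simpa using hfB⟩) hf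
    have := stmt5_reach_aux G ↑B u v p0 hcond
    rw [← hG'] at this
    rcases this with hr | ⟨h1, h2⟩ | ⟨h1, h2⟩
    · exact absurd (hinj i' j' hdi' hdj' hr) hne'
    · -- i' in comp u, j' in comp v
      have e1 : (⟨i', hdi'⟩ : {v : V // G.degree v = 1}) = i :=
        hφinj ((SimpleGraph.ConnectedComponent.sound h1).trans hi.symm)
      have e2 : (⟨j', hdj'⟩ : {v : V // G.degree v = 1}) = j :=
        hφinj ((SimpleGraph.ConnectedComponent.sound h2.symm).trans hj.symm)
      rw [show i' = (i : V) from congrArg Subtype.val e1,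
        show j' = (j : V) from congrArg Subtype.val e2]
    · have e1 : (⟨i', hdi'⟩ : {v : V // G.degree v = 1}) = j :=
        hφinj ((SimpleGraph.ConnectedComponent.sound h1).trans hj.symm)
      have e2 : (⟨j', hdj'⟩ : {v : V // G.degree v = 1}) = i :=
        hφinj ((SimpleGraph.ConnectedComponent.sound h2.symm).trans hi.symm)
      rw [show i' = (j : V) from congrArg Subtype.val e1,
        show j' = (i : V) from congrArg Subtype.val e2, Sym2.eq_swap]
end

section
/- In a finite tree T rooted at a leaf r with vertex order <_r by distance from r (any linear extension), if two vertices i and j are at equal distance from r with i <_r j under the floret-compatible order, and α is the <_r-minimal vertex on the unique path between i and j, then the two subpaths from α to i and from α to j have equal length, and each vertex on the subpath toward i at a given distance from α is <_r-smaller than the corresponding vertex on the subpath toward j. -/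
open SimpleGraph Walk

namespace Stmt12Aux

variable {V : Type*} [DecidableEq V] {T : SimpleGraph V}

/-- In a tree, every path between two vertices has length equal to the distance. -/
lemma path_length_eq (hT : T.IsTree) {u v : V} {w : T.Walk u v} (hw : w.IsPath) :
    w.length = T.dist u v := by
  obtain ⟨q, hq, hql⟩ := hT.isConnected.exists_path_of_dist u v
  obtain ⟨P, _, hPu⟩ := hT.existsUnique_path u v
  rw [hPu w hw, hPu q hq] at *
  exact hql

/-- Distance additivity at a point of a path. -/
lemma dist_add_of_mem_support (hT : T.IsTree) {u v x : V} {w : T.Walk u v}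
    (hw : w.IsPath) (hx : x ∈ w.support) :
    T.dist u x + T.dist x v = T.dist u v := by
  have hsplit := w.take_spec hx
  have h1 : (w.takeUntil x hx).length = T.dist u x := path_length_eq hT (hw.takeUntil hx)
  have h2 : (w.dropUntil x hx).length = T.dist x v := path_length_eq hT (hw.dropUntil hx)
  have h3 : ((w.takeUntil x hx).append (w.dropUntil x hx)).length = w.length := by
    rw [hsplit]
  rw [Walk.length_append, h1, h2, path_length_eq hT hw] at h3
  exact h3

lemma dist_adj (hT : T.IsTree) {u v : V} (h : T.Adj u v) : T.dist u v = 1 := by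
  have hp : (Walk.cons h Walk.nil).IsPath :=
    Walk.IsPath.nil.cons (by simpa using h.ne)
  simpa using (path_length_eq hT hp).symm

lemma isPath_concat (hT : T.IsTree) {u v w : V} {p : T.Walk u v} (hp : p.IsPath)
    (h : T.Adj v w) (hw : w ∉ p.support) : (p.concat h).IsPath := by
  rw [← Walk.isPath_reverse_iff, Walk.reverse_concat]
  exact hp.reverse.cons (by simpa [Walk.support_reverse] using hw)

/-- Adjacent vertices are at root-distances differing by one. -/
lemma adj_dist (hT : T.IsTree) (r : V) {u v : V} (h : T.Adj u v) :
    T.dist r v = T.dist r u + 1 ∨ T.dist r u = T.dist r v + 1 := by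
  obtain ⟨P, hP, hPl⟩ := hT.isConnected.exists_path_of_dist r u
  by_cases hv : v ∈ P.support
  · right
    have h1 := dist_add_of_mem_support hT hP hv
    have h2 : T.dist v u = 1 := dist_adj hT h.symm
    omega
  · left
    have hQ : (P.concat h).IsPath := isPath_concat hT hP h hv
    have := path_length_eq hT hQ
    rw [Walk.length_concat, hPl] at this
    omega

/-- The neighbor one step closer to the root is unique. -/
lemma down_unique (hT : T.IsTree) (r : V) {u u' v : V} (h : T.Adj u v)
    (hd : T.dist r u + 1 = T.dist r v) (h' : T.Adj u' v)
    (hd' : T.dist r u' + 1 = T.dist r v) : u = u' := by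
  have key : ∀ (x : V), T.Adj x v → T.dist r x + 1 = T.dist r v →
      ∃ Q : T.Walk r v, Q.IsPath ∧ Q.getVert (T.dist r v - 1) = x := by
    intro x hx hxd
    obtain ⟨P, hP, hPl⟩ := hT.isConnected.exists_path_of_dist r x
    have hv : v ∉ P.support := by
      intro hvmem
      have h1 := dist_add_of_mem_support hT hP hvmem
      have h2 : T.dist v x = 1 := dist_adj hT hx.symm
      omega
    refine ⟨P.concat hx, isPath_concat hT hP hx hv, ?_⟩
    have : T.dist r v - 1 = P.length := by omega
    rw [this, Walk.concat_eq_append, Walk.getVert_append]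
    simp
  obtain ⟨Q, hQ, hQx⟩ := key u h hd
  obtain ⟨Q', hQ', hQ'x⟩ := key u' h' hd'
  obtain ⟨W, _, hWu⟩ := hT.existsUnique_path r v
  rw [hWu Q hQ, hWu Q' hQ'] at *
  rw [← hQx, ← hQ'x]

variable (r : V) (par : V → V)

/-- Distance of iterated parents. -/
lemma iter_par_dist (hT : T.IsTree)
    (hpar : ∀ v : V, v ≠ r → T.Adj (par v) v ∧ T.dist r v = T.dist r (par v) + 1) :
    ∀ (k : ℕ) (v : V), k ≤ T.dist r v → T.dist r (par^[k] v) = T.dist r v - k := by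
  intro k
  induction k with
  | zero => intro v _; simp
  | succ k ih =>
    intro v hk
    have hk' : k ≤ T.dist r v := by omega
    have hw := ih v hk'
    have hwne : par^[k] v ≠ r := by
      intro e
      rw [e, SimpleGraph.dist_self] at hw
      omega
    have := (hpar _ hwne).2
    rw [Function.iterate_succ_apply']
    omega

/-- Explicit path from an iterated parent down to a vertex. -/
lemma walkUp (hT : T.IsTree)
    (hpar : ∀ v : V, v ≠ r → T.Adj (par v) v ∧ T.dist r v = T.dist r (par v) + 1) :
    ∀ (n : ℕ) (v : V), n ≤ T.dist r v →
      ∃ q : T.Walk (par^[n] v) v, q.IsPath ∧ q.length = n ∧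
        (∀ t ≤ n, q.getVert t = par^[n - t] v) ∧
        (∀ x ∈ q.support, ∃ k ≤ n, x = par^[k] v) := by
  intro n
  induction n with
  | zero =>
    intro v _
    refine ⟨Walk.nil, Walk.IsPath.nil, rfl, ?_, ?_⟩
    · intro t ht
      interval_cases t
      simp
    · intro x hx
      exact ⟨0, le_refl 0, by simpa using hx⟩
  | succ n ih =>
    intro v hn
    obtain ⟨q, hqp, hql, hqget, hqsup⟩ := ih v (by omega)
    have hwdist : T.dist r (par^[n] v) = T.dist r v - n := iter_par_dist r par hT hpar n v (by omega)
    have hwne : par^[n] v ≠ r := by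
      intro e
      rw [e, SimpleGraph.dist_self] at hwdist
      omega
    have hadj : T.Adj (par^[n + 1] v) (par^[n] v) := by
      rw [Function.iterate_succ_apply']
      exact (hpar _ hwne).1
    have hnotin : par^[n + 1] v ∉ q.support := by
      intro hmem
      obtain ⟨k, hk, hkx⟩ := hqsup _ hmem
      have d1 : T.dist r (par^[n + 1] v) = T.dist r v - (n + 1) :=
        iter_par_dist r par hT hpar (n + 1) v hn
      have d2 : T.dist r (par^[k] v) = T.dist r v - k :=
        iter_par_dist r par hT hpar k v (by omega)
      rw [hkx] at d1
      omega
    refine ⟨Walk.cons hadj q, hqp.cons hnotin, by rw [Walk.length_cons, hql], ?_, ?_⟩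
    · intro t ht
      match t with
      | 0 => simp
      | (t + 1) =>
        rw [Walk.getVert_cons_succ]
        have : n + 1 - (t + 1) = n - t := by omega
        rw [this]
        exact hqget t (by omega)
    · intro x hx
      rw [Walk.support_cons, List.mem_cons] at hx
      rcases hx with hx | hx
      · exact ⟨n + 1, le_refl _, hx⟩
      · obtain ⟨k, hk, hkx⟩ := hqsup x hx
        exact ⟨k, by omega, hkx⟩

/-- The depth-`d` ancestor is constant along a walk staying at distance ≥ `d`. -/
lemma ancestor_const (hT : T.IsTree)
    (hpar : ∀ v : V, v ≠ r → T.Adj (par v) v ∧ T.dist r v = T.dist r (par v) + 1)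
    (d : ℕ) :
    ∀ {a b : V} (w : T.Walk a b), (∀ x ∈ w.support, d ≤ T.dist r x) →
      par^[T.dist r a - d] a = par^[T.dist r b - d] b := by
  intro a b w
  induction w with
  | nil => intro _; rfl
  | @cons a c b h w ih =>
    intro hsup
    have hda : d ≤ T.dist r a := hsup a (Walk.start_mem_support _)
    have hdc : d ≤ T.dist r c := hsup c (by simp [Walk.support_cons, Walk.start_mem_support])
    have hrec := ih (fun x hx => hsup x (by simp [Walk.support_cons, hx]))
    have hstep : par^[T.dist r a - d] a = par^[T.dist r c - d] c := by
      rcases adj_dist hT r h with hca | hac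
      · -- dist r c = dist r a + 1
        have hcne : c ≠ r := by
          intro e; rw [e, SimpleGraph.dist_self] at hca; omega
        have hparc : par c = a := by
          have := hpar c hcne
          exact (down_unique hT r h (by omega) this.1 (by omega)).symm
        have he : T.dist r c - d = (T.dist r a - d) + 1 := by omega
        rw [he, Function.iterate_succ_apply, hparc]
      · -- dist r a = dist r c + 1
        have hane : a ≠ r := by
          intro e; rw [e, SimpleGraph.dist_self] at hac; omega
        have hpara : par a = c := by
          have := hpar a hane
          exact (down_unique hT r h.symm (by omega) this.1 (by omega)).symm
        have he : T.dist r a - d = (T.dist r c - d) + 1 := by omega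
        rw [he, Function.iterate_succ_apply, hpara]
    rw [hstep, hrec]

end Stmt12Aux

/-- Key claim in the proof of Lemma 5.2: if i and j are at equal distance from
the root r with i <_r j, and α is the <_r-minimal vertex on the unique path
between i and j, then the subpaths from α to i and from α to j have equal
length, and each vertex on the subpath toward i is <_r-smaller than the
corresponding vertex (at the same distance from α) on the subpath toward j. -/
theorem stmt_12 {V : Type*} [Fintype V] [DecidableEq V] (T : SimpleGraph V)
    [DecidableRel T.Adj] (hT : T.IsTree) (r : V) (hr : T.degree r = 1)
    (par : V → V)
    (hpar : ∀ v : V, v ≠ r → T.Adj (par v) v ∧ T.dist r v = T.dist r (par v) + 1)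
    (ord : V → ℕ) (hord : Function.Injective ord)
    (h1 : ∀ i j : V, T.dist r i < T.dist r j → ord i < ord j)
    (h2 : ∀ i j : V, i ≠ r → j ≠ r → T.dist r i = T.dist r j →
      ord (par i) < ord (par j) → ord i < ord j)
    (i j : V) (hd : T.dist r i = T.dist r j) (hij : ord i < ord j)
    (p : T.Walk i j) (hp : p.IsPath)
    (α : V) (hα : α ∈ p.support) (hmin : ∀ x ∈ p.support, ord α ≤ ord x)
    (q1 : T.Walk α i) (hq1 : q1.IsPath) (q2 : T.Walk α j) (hq2 : q2.IsPath) :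
    q1.length = q2.length ∧
      ∀ t : ℕ, 1 ≤ t → t ≤ q1.length → ord (q1.getVert t) < ord (q2.getVert t) := by
  classical
  set D := T.dist r i with hD
  set d := T.dist r α with hdα
  -- α has minimal distance on p
  have hdge : ∀ x ∈ p.support, d ≤ T.dist r x := by
    intro x hx
    by_contra hlt
    exact absurd (hmin x hx) (not_le.mpr (h1 x α (lt_of_not_ge hlt)))
  have hdi : d ≤ D := hdge i p.start_mem_support
  have hdjD : T.dist r j = D := hd.symm
  set n1 := D - d with hn1
  -- split p at α
  set p1 := p.takeUntil α hα with hp1def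
  set p2 := p.dropUntil α hα with hp2def
  have hp1 : p1.IsPath := hp.takeUntil hα
  have hp2 : p2.IsPath := hp.dropUntil hα
  -- ancestors
  have anc_i : par^[n1] i = α := by
    have := Stmt12Aux.ancestor_const r par hT hpar d p1
      (fun x hx => hdge x (p.support_takeUntil_subset hα hx))
    simpa [← hD, ← hdα, hn1] using this
  have anc_j : par^[n1] j = α := by
    have := Stmt12Aux.ancestor_const r par hT hpar d p2
      (fun x hx => hdge x (p.support_dropUntil_subset hα hx))
    rw [hdjD] at this
    exact (by simpa [← hdα, hn1] using this : α = par^[n1] j).symm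
  -- identify q1 and q2 with explicit walkUps
  obtain ⟨Q1, hQ1p, hQ1l, hQ1get, _⟩ :=
    Stmt12Aux.walkUp r par hT hpar n1 i (by omega)
  obtain ⟨Q2, hQ2p, hQ2l, hQ2get, _⟩ :=
    Stmt12Aux.walkUp r par hT hpar n1 j (by rw [hdjD]; omega)
  have hq1eq : q1 = Q1.copy anc_i rfl := by
    obtain ⟨W, _, hWu⟩ := hT.existsUnique_path α i
    rw [hWu q1 hq1, hWu (Q1.copy anc_i rfl) (by simpa using hQ1p)]
  have hq2eq : q2 = Q2.copy anc_j rfl := by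
    obtain ⟨W, _, hWu⟩ := hT.existsUnique_path α j
    rw [hWu q2 hq2, hWu (Q2.copy anc_j rfl) (by simpa using hQ2p)]
  have hq1l : q1.length = n1 := by rw [hq1eq, Walk.length_copy, hQ1l]
  have hq2l : q2.length = n1 := by rw [hq2eq, Walk.length_copy, hQ2l]
  have hq1get : ∀ t ≤ n1, q1.getVert t = par^[n1 - t] i := by
    intro t ht
    rw [hq1eq, Walk.getVert_copy]
    exact hQ1get t ht
  have hq2get : ∀ t ≤ n1, q2.getVert t = par^[n1 - t] j := by
    intro t ht
    rw [hq2eq, Walk.getVert_copy]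
    exact hQ2get t ht
  -- identify q1.reverse = p1 and q2 = p2
  have hq1p1 : q1.reverse = p1 := by
    obtain ⟨W, _, hWu⟩ := hT.existsUnique_path i α
    rw [hWu q1.reverse hq1.reverse, hWu p1 hp1]
  have hq2p2 : q2 = p2 := by
    obtain ⟨W, _, hWu⟩ := hT.existsUnique_path α j
    rw [hWu q2 hq2, hWu p2 hp2]
  -- ancestors of i and j below level n1 are distinct
  have hne : ∀ s, s < n1 → par^[s] i ≠ par^[s] j := by
    intro s hs heq
    have hws : T.dist r (par^[s] i) = D - s :=
      Stmt12Aux.iter_par_dist r par hT hpar s i (by omega)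
    have hwα : par^[s] i ≠ α := by
      intro e
      rw [e, ← hdα] at hws
      omega
    have hmem1 : par^[s] i ∈ q1.support := by
      rw [Walk.mem_support_iff_exists_getVert]
      refine ⟨n1 - s, ?_, by omega⟩
      rw [hq1get (n1 - s) (by omega)]
      congr 1
      omega
    have hmem2 : par^[s] i ∈ q2.support := by
      rw [Walk.mem_support_iff_exists_getVert]
      refine ⟨n1 - s, ?_, by omega⟩
      rw [hq2get (n1 - s) (by omega), heq]
      congr 1
      omega
    have hmem1' : par^[s] i ∈ p1.support := by
      rw [← hq1p1, Walk.support_reverse, List.mem_reverse]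
      exact hmem1
    have hmem2' : par^[s] i ∈ p2.support := by rw [← hq2p2]; exact hmem2
    have hsupp : p.support = p1.support ++ p2.support.tail := by
      conv_lhs => rw [← p.take_spec hα]
      exact Walk.support_append _ _
    have hnd : (p1.support ++ p2.support.tail).Nodup := by
      rw [← hsupp]; exact hp.support_nodup
    have hdisj := (List.nodup_append'.mp hnd).2.2
    have hmem2'' : par^[s] i ∈ p2.support.tail := by
      have := p2.support_eq_cons
      rw [this, List.mem_cons] at hmem2'
      rcases hmem2' with h | h
      · exact absurd h hwα
      · exact h
    exact hdisj hmem1' hmem2''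
  -- order propagation up the tree
  have claim : ∀ s, s ≤ n1 → par^[s] i = par^[s] j ∨ ord (par^[s] i) < ord (par^[s] j) := by
    intro s
    induction s with
    | zero => intro _; exact Or.inr (by simpa using hij)
    | succ s ih =>
      intro hs1
      rcases ih (by omega) with heq | hlt
      · left
        rw [Function.iterate_succ_apply', Function.iterate_succ_apply', heq]
      · set a := par^[s] i with ha
        set b := par^[s] j with hb
        have hda : T.dist r a = D - s := Stmt12Aux.iter_par_dist r par hT hpar s i (by omega)
        have hdb : T.dist r b = D - s := by
          have := Stmt12Aux.iter_par_dist r par hT hpar s j (by rw [hdjD]; omega)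
          rw [hdjD] at this
          exact this
        have hane : a ≠ r := by
          intro e; rw [e, SimpleGraph.dist_self] at hda; omega
        have hbne : b ≠ r := by
          intro e; rw [e, SimpleGraph.dist_self] at hdb; omega
        rcases lt_trichotomy (ord (par a)) (ord (par b)) with h | h | h
        · right
          rw [Function.iterate_succ_apply', Function.iterate_succ_apply']
          exact h
        · left
          rw [Function.iterate_succ_apply', Function.iterate_succ_apply']
          exact hord h
        · exfalso
          have := h2 b a hbne hane (by omega) h
          omega
  constructor
  · rw [hq1l, hq2l]
  · intro t ht1 ht2
    rw [hq1l] at ht2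
    have hs : n1 - t < n1 := by omega
    rcases claim (n1 - t) (by omega) with heq | hlt
    · exact absurd heq (hne (n1 - t) hs)
    · rw [hq1get t ht2, hq2get t ht2]
      exact hlt
end

section
/- The normalized volume of the cosmological polytope of the path I_n with n edges equals 4^n. -/
open MeasureTheory
open scoped ENNReal
open Set Pointwise

/-- The vertices of the cosmological polytope of the path I_n on vertex set
Fin (n+1) with edges e = {e, e+1}, written in the coordinates of the hyperplane
{∑ x = 1} obtained by dropping the coordinate of the last vertex — a unimodular
affine chart for the lattice, so that the normalized volume is (dim)! times the
Lebesgue volume in these coordinates. -/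
def pathGens (n : ℕ) : Set (({v : Fin (n + 1) // v ≠ Fin.last n} ⊕ Fin n) → ℝ) :=
  {p | ∃ e : Fin n, ∃ a b c : ℝ,
    ((a, b, c) = ((1 : ℝ), (1 : ℝ), (-1 : ℝ)) ∨
      (a, b, c) = (1, -1, 1) ∨ (a, b, c) = (-1, 1, 1)) ∧
    p = fun k => Sum.elim
      (fun v : {v : Fin (n + 1) // v ≠ Fin.last n} =>
        (if (v : Fin (n + 1)) = e.castSucc then a else 0) +
          (if (v : Fin (n + 1)) = e.succ then b else 0))
      (fun f : Fin n => if f = e then c else 0) k}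


section LemmaA
variable {E : Type*} [AddCommGroup E] [Module ℝ E]

/-- embedding of `E` as `{(0,0)} × E`. -/
def inrL (E : Type*) [AddCommGroup E] [Module ℝ E] : E →ₗ[ℝ] (ℝ × ℝ) × E :=
  LinearMap.prod 0 LinearMap.id

@[simp] lemma inrL_apply (x : E) : inrL E x = ((0, 0), x) := rfl

def threePts (e₀ : E) : Set ((ℝ × ℝ) × E) :=
  {((1, -1), e₀), ((1, 1), -e₀), ((-1, 1), e₀)}

def modelSet (X : Set E) (e₀ : E) : Set ((ℝ × ℝ) × E) :=
  {z | z.1.1 ≤ 1 ∧ z.1.2 ≤ 1 ∧ 0 ≤ z.1.1 + z.1.2 ∧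
    z.2 + min z.1.1 z.1.2 • e₀ ∈ (1 - max z.1.1 z.1.2) • convexHull ℝ X}

lemma combo3_mem_smul {C : Set E} (hC : Convex ℝ C) {x1 x2 x3 : E} (h1 : x1 ∈ C)
    (h2 : x2 ∈ C) (h3 : x3 ∈ C) {p1 p2 p3 lam : ℝ} (hp1 : 0 ≤ p1) (hp2 : 0 ≤ p2)
    (hp3 : 0 ≤ p3) (hsum : p1 + p2 + p3 = lam) :
    p1 • x1 + p2 • x2 + p3 • x3 ∈ lam • C := by
  rcases eq_or_lt_of_le (by linarith : (0:ℝ) ≤ lam) with h0 | hpos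
  · have e1 : p1 = 0 := by linarith
    have e2 : p2 = 0 := by linarith
    have e3 : p3 = 0 := by linarith
    refine mem_smul_set.2 ⟨x1, h1, ?_⟩
    rw [← h0, e1, e2, e3]; simp
  · refine mem_smul_set.2 ⟨(p1 / lam) • x1 + (p2 / lam) • x2 + (p3 / lam) • x3, ?_, ?_⟩
    · have := Convex.sum_mem (t := (Finset.univ : Finset (Fin 3)))
        (w := ![p1 / lam, p2 / lam, p3 / lam]) (z := ![x1, x2, x3]) hC
        (by intro i _; fin_cases i <;> simp <;> positivity)
        (by simp [Fin.sum_univ_three]; field_simp; linarith)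
        (by intro i _; fin_cases i <;> assumption)
      simpa [Fin.sum_univ_three] using this
    · rw [smul_add, smul_add, smul_smul, smul_smul, smul_smul]
      rw [mul_div_cancel₀ _ (ne_of_gt hpos), mul_div_cancel₀ _ (ne_of_gt hpos),
        mul_div_cancel₀ _ (ne_of_gt hpos)]

lemma combo4_mem {C : Set ((ℝ × ℝ) × E)} (hC : Convex ℝ C) {x1 x2 x3 x4 : (ℝ × ℝ) × E}
    (h1 : x1 ∈ C) (h2 : x2 ∈ C) (h3 : x3 ∈ C) (h4 : x4 ∈ C) {c1 c2 c3 c4 : ℝ}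
    (hp1 : 0 ≤ c1) (hp2 : 0 ≤ c2) (hp3 : 0 ≤ c3) (hp4 : 0 ≤ c4)
    (hsum : c1 + c2 + c3 + c4 = 1) :
    c1 • x1 + c2 • x2 + c3 • x3 + c4 • x4 ∈ C := by
  have := Convex.sum_mem (t := (Finset.univ : Finset (Fin 4)))
    (w := ![c1, c2, c3, c4]) (z := ![x1, x2, x3, x4]) hC
    (by intro i _; fin_cases i <;> assumption)
    (by simp [Fin.sum_univ_four]; linarith)
    (by intro i _; fin_cases i <;> assumption)
  simpa [Fin.sum_univ_four, add_assoc] using this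


lemma modelAux {H : Set E} (hH : Convex ℝ H) {e₀ v v' w w' : E} (hv : v ∈ H) (hv' : v' ∈ H)
    (he : e₀ ∈ H) {a b a' b' t t' : ℝ} (ha : a ≤ 1) (hb : b ≤ 1) (ha' : a' ≤ 1) (hb' : b' ≤ 1)
    (ht : 0 ≤ t) (ht' : 0 ≤ t') (htt : t + t' = 1)
    (hveq : (1 - max a b) • v = w + min a b • e₀)
    (hveq' : (1 - max a' b') • v' = w' + min a' b' • e₀) :
    t • w + t' • w' + min (t * a + t' * a') (t * b + t' * b') • e₀ ∈
      (1 - max (t * a + t' * a') (t * b + t' * b')) • H := by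
  have key1 : min a b + max a b = a + b := min_add_max a b
  have key2 : min a' b' + max a' b' = a' + b' := min_add_max a' b'
  have key3 : min (t * a + t' * a') (t * b + t' * b') +
      max (t * a + t' * a') (t * b + t' * b') = (t * a + t' * a') + (t * b + t' * b') :=
    min_add_max _ _
  have hdelta : t * min a b + t' * min a' b' ≤ min (t * a + t' * a') (t * b + t' * b') := by
    apply le_min
    · have h1 : min a b ≤ a := min_le_left a b
      have h2 : min a' b' ≤ a' := min_le_left a' b'
      nlinarith
    · have h1 : min a b ≤ b := min_le_right a b
      have h2 : min a' b' ≤ b' := min_le_right a' b'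
      nlinarith
  have hw : w = (1 - max a b) • v - min a b • e₀ := by rw [eq_sub_iff_add_eq, hveq]
  have hw' : w' = (1 - max a' b') • v' - min a' b' • e₀ := by rw [eq_sub_iff_add_eq, hveq']
  have hexpr : t • w + t' • w' + min (t * a + t' * a') (t * b + t' * b') • e₀ =
      (t * (1 - max a b)) • v + (t' * (1 - max a' b')) • v' +
        (min (t * a + t' * a') (t * b + t' * b') - t * min a b - t' * min a' b') • e₀ := by
    rw [hw, hw']; module
  rw [hexpr]
  apply combo3_mem_smul hH hv hv' he
  · have h1 : max a b ≤ 1 := max_le ha hb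
    nlinarith
  · have h1 : max a' b' ≤ 1 := max_le ha' hb'
    nlinarith
  · linarith
  · have e1 : t * min a b + t * max a b = t * a + t * b := by rw [← mul_add, key1, mul_add]
    have e2 : t' * min a' b' + t' * max a' b' = t' * a' + t' * b' := by
      rw [← mul_add, key2, mul_add]
    nlinarith [e1, e2, key3]

theorem hull_eq_modelSet (X : Set E) (e₀ : E) (he : e₀ ∈ convexHull ℝ X) :
    convexHull ℝ (threePts e₀ ∪ inrL E '' X) = modelSet X e₀ := by
  apply Subset.antisymm
  · apply convexHull_min
    · rintro z (hz | ⟨x, hx, rfl⟩)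
      · rcases hz with rfl | rfl | rfl
        · refine ⟨le_refl _, by norm_num, by norm_num, ?_⟩
          show e₀ + min (1:ℝ) (-1) • e₀ ∈ (1 - max (1:ℝ) (-1)) • convexHull ℝ X
          rw [min_eq_right (by norm_num : (-1:ℝ) ≤ 1), max_eq_left (by norm_num : (-1:ℝ) ≤ 1)]
          exact mem_smul_set.2 ⟨e₀, he, by simp⟩
        · refine ⟨le_refl _, le_refl _, by norm_num, ?_⟩
          show -e₀ + min (1:ℝ) 1 • e₀ ∈ (1 - max (1:ℝ) 1) • convexHull ℝ X
          rw [min_self, max_self]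
          exact mem_smul_set.2 ⟨e₀, he, by simp⟩
        · refine ⟨by norm_num, le_refl _, by norm_num, ?_⟩
          show e₀ + min (-1:ℝ) 1 • e₀ ∈ (1 - max (-1:ℝ) 1) • convexHull ℝ X
          rw [min_eq_left (by norm_num : (-1:ℝ) ≤ 1), max_eq_right (by norm_num : (-1:ℝ) ≤ 1)]
          exact mem_smul_set.2 ⟨e₀, he, by simp⟩
      · refine ⟨by norm_num, by norm_num, by norm_num, ?_⟩
        show x + min (0:ℝ) 0 • e₀ ∈ (1 - max (0:ℝ) 0) • convexHull ℝ X
        rw [min_self, max_self]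
        exact mem_smul_set.2 ⟨x, subset_convexHull ℝ X hx, by norm_num⟩
    · -- convexity of modelSet
      rintro z hz z' hz' t t' ht ht' htt
      obtain ⟨ha, hb, hab, hsm⟩ := hz
      obtain ⟨ha', hb', hab', hsm'⟩ := hz'
      obtain ⟨v, hv, hveq⟩ := mem_smul_set.1 hsm
      obtain ⟨v', hv', hveq'⟩ := mem_smul_set.1 hsm'
      refine ⟨?_, ?_, ?_, ?_⟩
      · show t * z.1.1 + t' * z'.1.1 ≤ 1
        nlinarith
      · show t * z.1.2 + t' * z'.1.2 ≤ 1
        nlinarith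
      · show 0 ≤ (t * z.1.1 + t' * z'.1.1) + (t * z.1.2 + t' * z'.1.2)
        nlinarith
      · exact modelAux (convex_convexHull ℝ X) hv hv' he ha hb ha' hb' ht ht' htt hveq hveq'
  · rintro z ⟨h1, h2, h3, h4⟩
    obtain ⟨v, hv, hveq⟩ := mem_smul_set.1 h4
    have hg1 : (((1:ℝ), (-1:ℝ)), e₀) ∈ convexHull ℝ (threePts e₀ ∪ inrL E '' X) :=
      subset_convexHull ℝ _ (Or.inl (by simp [threePts]))
    have hg2 : (((1:ℝ), (1:ℝ)), -e₀) ∈ convexHull ℝ (threePts e₀ ∪ inrL E '' X) :=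
      subset_convexHull ℝ _ (Or.inl (by simp [threePts]))
    have hg3 : (((-1:ℝ), (1:ℝ)), e₀) ∈ convexHull ℝ (threePts e₀ ∪ inrL E '' X) :=
      subset_convexHull ℝ _ (Or.inl (by simp [threePts]))
    have hq : ((((0:ℝ), (0:ℝ)) : ℝ × ℝ), v) ∈ convexHull ℝ (threePts e₀ ∪ inrL E '' X) := by
      have hmem : inrL E v ∈ inrL E '' convexHull ℝ X := Set.mem_image_of_mem _ hv
      rw [LinearMap.image_convexHull] at hmem
      simpa using convexHull_mono subset_union_right hmem
    have hzeq : z = ((z.1.1 - min z.1.1 z.1.2)/2) • (((1:ℝ), (-1:ℝ)), e₀) +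
        ((z.1.1 + z.1.2)/2) • (((1:ℝ), (1:ℝ)), -e₀) +
        ((z.1.2 - min z.1.1 z.1.2)/2) • (((-1:ℝ), (1:ℝ)), e₀) +
        (1 - max z.1.1 z.1.2) • ((((0:ℝ), (0:ℝ)) : ℝ × ℝ), v) := by
      have h2eq : (1 - max z.1.1 z.1.2) • v = z.2 + min z.1.1 z.1.2 • e₀ := hveq
      apply Prod.ext
      · apply Prod.ext <;> · show _ = _ ; simp only [Prod.fst_add, Prod.snd_add,
          Prod.smul_fst, Prod.smul_snd, smul_eq_mul] ; ring
      · show z.2 = _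
        simp only [Prod.snd_add, Prod.smul_snd]
        rw [h2eq]
        module
    rw [hzeq]
    apply combo4_mem (convex_convexHull ℝ _) hg1 hg2 hg3 hq
    · have := min_le_left z.1.1 z.1.2; linarith
    · linarith
    · have := min_le_right z.1.1 z.1.2; linarith
    · have := max_le h1 h2; linarith
    · have := min_add_max z.1.1 z.1.2; linarith
end LemmaA


section LemmaC

lemma integK (m : ℕ) (c : ℝ) : ∫ b in c..1, (1 - b) ^ m = (1 - c) ^ (m + 1) / (m + 1) := by
  have h := intervalIntegral.integral_comp_sub_left (a := c) (b := 1) (fun x : ℝ => x ^ m) 1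
  rw [h]
  rw [integral_pow]
  norm_num

/-- the 1-d outer function -/
noncomputable def Afun (d : ℕ) : ℝ → ℝ :=
  Set.indicator (Icc (-1 : ℝ) 1)
    (fun a => 2 * max a 0 * (1 - a) ^ d + (1 - |a|) ^ (d + 1) / (d + 1))

lemma gcont (d : ℕ) : Continuous
    (fun a : ℝ => 2 * max a 0 * (1 - a) ^ d + (1 - |a|) ^ (d + 1) / (d + 1)) := by
  apply Continuous.add
  · exact (continuous_const.mul (continuous_id.max continuous_const)).mul
      ((continuous_const.sub continuous_id).pow d)
  · exact ((continuous_const.sub continuous_abs).pow (d + 1)).div_const _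

lemma outer_integral (d : ℕ) : ∫ a, Afun d a = 4 / ((d + 1) * (d + 2)) := by
  rw [Afun, integral_indicator measurableSet_Icc, integral_Icc_eq_integral_Ioc,
    ← intervalIntegral.integral_of_le (by norm_num : (-1 : ℝ) ≤ 1)]
  have hi1 : IntervalIntegrable
      (fun a : ℝ => 2 * max a 0 * (1 - a) ^ d + (1 - |a|) ^ (d + 1) / (d + 1))
      volume (-1) 0 := (gcont d).intervalIntegrable _ _
  have hi2 : IntervalIntegrable
      (fun a : ℝ => 2 * max a 0 * (1 - a) ^ d + (1 - |a|) ^ (d + 1) / (d + 1))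
      volume 0 1 := (gcont d).intervalIntegrable _ _
  rw [← intervalIntegral.integral_add_adjacent_intervals hi1 hi2]
  have e1 : ∫ a in (-1 : ℝ)..0, (2 * max a 0 * (1 - a) ^ d + (1 - |a|) ^ (d + 1) / (d + 1))
      = 1 / ((d + 1) * (d + 2)) := by
    rw [intervalIntegral.integral_congr
      (g := fun a : ℝ => (1 + a) ^ (d + 1) / (d + 1)) ?_]
    · rw [intervalIntegral.integral_div]
      have h := intervalIntegral.integral_comp_add_left (a := (-1 : ℝ)) (b := 0)
        (fun x : ℝ => x ^ (d + 1)) 1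
      rw [h, integral_pow]
      have hz : (0 : ℝ) ^ (d + 1 + 1) = 0 := zero_pow (by omega)
      push_cast
      rw [show (1 : ℝ) + -1 = 0 by ring, hz]
      rw [div_div]
      norm_num
      ring
    · intro x hx
      rw [uIcc_of_le (by norm_num : (-1 : ℝ) ≤ 0)] at hx
      obtain ⟨hx1, hx2⟩ := hx
      simp only
      rw [max_eq_right hx2, abs_of_nonpos hx2]
      ring_nf
  have e2 : ∫ a in (0 : ℝ)..1, (2 * max a 0 * (1 - a) ^ d + (1 - |a|) ^ (d + 1) / (d + 1))
      = 3 / ((d + 1) * (d + 2)) := by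
    rw [intervalIntegral.integral_congr
      (g := fun a : ℝ => (2 * ((1 - a) ^ d - (1 - a) ^ (d + 1)) + (1 - a) ^ (d + 1) / (d + 1))) ?_]
    · rw [intervalIntegral.integral_add, intervalIntegral.integral_const_mul,
        intervalIntegral.integral_sub, intervalIntegral.integral_div]
      · rw [integK d 0, integK (d + 1) 0]
        push_cast
        have h1 : ((d : ℝ) + 1) ≠ 0 := by positivity
        have h2 : ((d : ℝ) + 2) ≠ 0 := by positivity
        field_simp
        ring
      · exact ((continuous_const.sub continuous_id).pow d).intervalIntegrable _ _
      · exact ((continuous_const.sub continuous_id).pow (d + 1)).intervalIntegrable _ _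
      · exact (continuous_const.mul (((continuous_const.sub continuous_id).pow d).sub
          ((continuous_const.sub continuous_id).pow (d + 1)))).intervalIntegrable _ _
      · exact (((continuous_const.sub continuous_id).pow (d + 1)).div_const _).intervalIntegrable _ _
    · intro x hx
      rw [uIcc_of_le (by norm_num : (0 : ℝ) ≤ 1)] at hx
      obtain ⟨hx1, hx2⟩ := hx
      simp only
      rw [max_eq_left hx1, abs_of_nonneg hx1, pow_succ]
      ring
  rw [e1, e2]
  rw [← add_div]
  norm_num


def Tset : Set (ℝ × ℝ) := {p | p.1 ≤ 1 ∧ p.2 ≤ 1 ∧ 0 ≤ p.1 + p.2}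

lemma Tset_closed : IsClosed Tset := by
  apply IsClosed.inter (isClosed_le continuous_fst continuous_const)
  exact IsClosed.inter (isClosed_le continuous_snd continuous_const)
    (isClosed_le continuous_const (continuous_fst.add continuous_snd))

lemma Tset_meas : MeasurableSet Tset := Tset_closed.measurableSet

lemma Tset_compact : IsCompact Tset := by
  apply (isCompact_Icc (a := ((-1 : ℝ), (-1 : ℝ))) (b := ((1 : ℝ), (1 : ℝ)))).of_isClosed_subset
    Tset_closed
  rintro ⟨x, y⟩ ⟨h1, h2, h3⟩
  simp only [mem_Icc, Prod.mk_le_mk] at *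
  constructor
  · constructor <;> linarith
  · constructor <;> linarith

lemma fTcont (d : ℕ) : Continuous (fun p : ℝ × ℝ => (1 - max p.1 p.2) ^ d) :=
  (continuous_const.sub (continuous_fst.max continuous_snd)).pow d

lemma inner_integral (d : ℕ) (a : ℝ) :
    ∫ b, Tset.indicator (fun p => (1 - max p.1 p.2) ^ d) (a, b) = Afun d a := by
  by_cases ha1 : a ≤ 1
  · by_cases ha2 : (-1 : ℝ) ≤ a
    · -- main case
      have hF : (fun b => Tset.indicator (fun p : ℝ × ℝ => (1 - max p.1 p.2) ^ d) (a, b))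
          = Set.indicator (Icc (-a) 1) (fun b => (1 - max a b) ^ d) := by
        funext b
        by_cases hb : b ∈ Icc (-a) 1
        · rw [indicator_of_mem hb]
          obtain ⟨hb1, hb2⟩ := hb
          rw [indicator_of_mem (show (a, b) ∈ Tset from ⟨ha1, hb2, by linarith⟩)]
        · rw [indicator_of_notMem hb, indicator_of_notMem]
          intro hmem
          obtain ⟨h1, h2, h3⟩ := hmem
          exact hb ⟨by linarith, h2⟩
      rw [hF, integral_indicator measurableSet_Icc, integral_Icc_eq_integral_Ioc,
        ← intervalIntegral.integral_of_le (by linarith : -a ≤ 1)]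
      have hAmem : Afun d a = 2 * max a 0 * (1 - a) ^ d + (1 - |a|) ^ (d + 1) / (d + 1) := by
        rw [Afun, indicator_of_mem (mem_Icc.2 ⟨ha2, ha1⟩)]
      rcases le_or_gt 0 a with hpos | hneg
      · have hint1 : IntervalIntegrable (fun b : ℝ => (1 - max a b) ^ d) volume (-a) a :=
          ((continuous_const.sub (continuous_const.max continuous_id)).pow d).intervalIntegrable _ _
        have hint2 : IntervalIntegrable (fun b : ℝ => (1 - max a b) ^ d) volume a 1 :=
          ((continuous_const.sub (continuous_const.max continuous_id)).pow d).intervalIntegrable _ _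
        rw [← intervalIntegral.integral_add_adjacent_intervals hint1 hint2]
        have p1 : ∫ b in (-a)..a, (1 - max a b) ^ d = 2 * a * (1 - a) ^ d := by
          rw [intervalIntegral.integral_congr (g := fun _ : ℝ => (1 - a) ^ d) ?_]
          · rw [intervalIntegral.integral_const, smul_eq_mul]
            ring
          · intro x hx
            rw [uIcc_of_le (by linarith : -a ≤ a)] at hx
            simp only
            rw [max_eq_left hx.2]
        have p2 : ∫ b in a..1, (1 - max a b) ^ d = (1 - a) ^ (d + 1) / (d + 1) := by
          rw [intervalIntegral.integral_congr (g := fun b : ℝ => (1 - b) ^ d) ?_]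
          · exact integK d a
          · intro x hx
            rw [uIcc_of_le ha1] at hx
            simp only
            rw [max_eq_right hx.1]
        rw [p1, p2, hAmem, max_eq_left hpos, abs_of_nonneg hpos]
      · have p3 : ∫ b in (-a)..1, (1 - max a b) ^ d = (1 - (-a)) ^ (d + 1) / (d + 1) := by
          rw [intervalIntegral.integral_congr (g := fun b : ℝ => (1 - b) ^ d) ?_]
          · exact integK d (-a)
          · intro x hx
            rw [uIcc_of_le (by linarith : -a ≤ 1)] at hx
            simp only
            rw [max_eq_right (by linarith [hx.1] : a ≤ x)]
        rw [p3, hAmem, max_eq_right (le_of_lt hneg), abs_of_neg hneg]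
        ring_nf
    · -- a < -1 : zero
      push_neg at ha2
      have hF : (fun b => Tset.indicator (fun p : ℝ × ℝ => (1 - max p.1 p.2) ^ d) (a, b))
          = fun _ => (0 : ℝ) := by
        funext b
        rw [indicator_of_notMem]
        rintro ⟨h1, h2, h3⟩
        simp only at h2 h3
        linarith
      rw [hF, integral_zero, Afun, indicator_of_notMem]
      rw [mem_Icc]
      push_neg
      intro h; linarith
  · -- a > 1 : zero
    push_neg at ha1
    have hF : (fun b => Tset.indicator (fun p : ℝ × ℝ => (1 - max p.1 p.2) ^ d) (a, b))
        = fun _ => (0 : ℝ) := by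
      funext b
      rw [indicator_of_notMem]
      rintro ⟨h1, h2, h3⟩
      simp only at h1
      linarith
    rw [hF, integral_zero, Afun, indicator_of_notMem]
    rw [mem_Icc]
    push_neg
    intro h; linarith

theorem lintegral_Tset (d : ℕ) :
    ∫⁻ p : ℝ × ℝ, Tset.indicator (fun p => ENNReal.ofReal ((1 - max p.1 p.2) ^ d)) p
      = ENNReal.ofReal (4 / ((d + 1) * (d + 2))) := by
  have hnn : ∀ p ∈ Tset, (0 : ℝ) ≤ (1 - max p.1 p.2) ^ d := by
    rintro ⟨x, y⟩ ⟨h1, h2, _⟩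
    have : max x y ≤ 1 := max_le h1 h2
    have : (0 : ℝ) ≤ 1 - max x y := by linarith
    positivity
  have hInt : Integrable (Tset.indicator fun p : ℝ × ℝ => (1 - max p.1 p.2) ^ d) := by
    exact (((fTcont d).continuousOn).integrableOn_compact Tset_compact).integrable_indicator
      Tset_meas
  have step1 : ∫⁻ p : ℝ × ℝ, Tset.indicator (fun p => ENNReal.ofReal ((1 - max p.1 p.2) ^ d)) p
      = ∫⁻ p : ℝ × ℝ, ENNReal.ofReal
          (Tset.indicator (fun p : ℝ × ℝ => (1 - max p.1 p.2) ^ d) p) := by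
    apply lintegral_congr
    intro p
    by_cases hp : p ∈ Tset
    · rw [indicator_of_mem hp, indicator_of_mem hp]
    · rw [indicator_of_notMem hp, indicator_of_notMem hp, ENNReal.ofReal_zero]
  rw [step1, ← ofReal_integral_eq_lintegral_ofReal hInt
    (Filter.Eventually.of_forall (indicator_nonneg hnn))]
  congr 1
  have hInt' : Integrable (Tset.indicator fun p : ℝ × ℝ => (1 - max p.1 p.2) ^ d)
      ((volume : Measure ℝ).prod volume) := by
    rwa [← Measure.volume_eq_prod]
  rw [Measure.volume_eq_prod, integral_prod _ hInt']
  rw [integral_congr_ae (Filter.Eventually.of_forall (fun a => inner_integral d a))]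
  rw [outer_integral d]

end LemmaC

section LemmaB
variable {α : Type*} [Fintype α]

theorem volume_modelSet (X : Set (α → ℝ)) (e₀ : α → ℝ) (hX : X.Finite)
    (he : e₀ ∈ convexHull ℝ X) :
    volume (modelSet X e₀) =
      ENNReal.ofReal (4 / ((Fintype.card α + 1) * (Fintype.card α + 2))) *
        volume (convexHull ℝ X) := by
  have hG : modelSet X e₀ = convexHull ℝ (threePts e₀ ∪ inrL (α → ℝ) '' X) :=
    (hull_eq_modelSet X e₀ he).symm
  have hGfin : (threePts e₀ ∪ inrL (α → ℝ) '' X).Finite := by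
    apply Set.Finite.union
    · exact ((Set.finite_singleton _).insert _).insert _
    · exact hX.image _
  have hcomp : IsCompact (modelSet X e₀) := hG ▸ hGfin.isCompact_convexHull (𝕜 := ℝ)
  have hmeas : MeasurableSet (modelSet X e₀) := hcomp.isClosed.measurableSet
  rw [Measure.volume_eq_prod, Measure.prod_apply hmeas]
  have fiber_eq : ∀ p : ℝ × ℝ, volume (Prod.mk p ⁻¹' modelSet X e₀) =
      Tset.indicator (fun p => ENNReal.ofReal ((1 - max p.1 p.2) ^ Fintype.card α)) p *
        volume (convexHull ℝ X) := by
    intro p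
    by_cases hp : p ∈ Tset
    · obtain ⟨h1, h2, h3⟩ := id hp
      have hfib : Prod.mk p ⁻¹' modelSet X e₀ =
          (fun w => w + min p.1 p.2 • e₀) ⁻¹' ((1 - max p.1 p.2) • convexHull ℝ X) := by
        ext w
        simp only [mem_preimage, modelSet, mem_setOf_eq]
        exact ⟨fun h => h.2.2.2, fun h => ⟨h1, h2, h3, h⟩⟩
      rw [hfib, measure_preimage_add_right, Measure.addHaar_smul,
        indicator_of_mem hp]
      congr 2
      rw [Module.finrank_pi]
      rw [abs_of_nonneg]
      apply pow_nonneg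
      have : max p.1 p.2 ≤ 1 := max_le h1 h2
      linarith
    · have hfib : Prod.mk p ⁻¹' modelSet X e₀ = ∅ := by
        ext w
        simp only [mem_preimage, modelSet, mem_setOf_eq, mem_empty_iff_false, iff_false]
        rintro ⟨h1, h2, h3, _⟩
        exact hp ⟨h1, h2, h3⟩
      rw [hfib, measure_empty, indicator_of_notMem hp, zero_mul]
  rw [lintegral_congr fiber_eq]
  rw [lintegral_mul_const _ (Measurable.indicator
    ((Continuous.measurable (by continuity)).ennreal_ofReal) Tset_meas)]
  rw [lintegral_Tset]

end LemmaB

abbrev pidx (n : ℕ) : Type := {v : Fin (n + 1) // v ≠ Fin.last n} ⊕ Fin n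

/-- generator of the cosmological polytope of a path -/
def gen (n : ℕ) (e : Fin n) (a b c : ℝ) : pidx n → ℝ :=
  Sum.elim
    (fun v : {v : Fin (n + 1) // v ≠ Fin.last n} =>
      (if (v : Fin (n + 1)) = e.castSucc then a else 0) +
        (if (v : Fin (n + 1)) = e.succ then b else 0))
    (fun f : Fin n => if f = e then c else 0)

/-- indicator of the first vertex -/
def e0 (k : ℕ) : pidx k → ℝ :=
  Sum.elim (fun v => if (v : Fin (k + 1)) = 0 then 1 else 0) (fun _ => 0)

lemma zero_ne_last (k : ℕ) : (0 : Fin (k + 2)) ≠ Fin.last (k + 1) := by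
  intro h
  have := congrArg Fin.val h
  simp [Fin.last] at this

lemma succ_ne_last {k : ℕ} (v : {v : Fin (k + 1) // v ≠ Fin.last k}) :
    (v : Fin (k + 1)).succ ≠ Fin.last (k + 1) := by
  intro h
  rw [← Fin.succ_last] at h
  exact v.2 (Fin.succ_inj.mp h)

/-- the index bijection -/
def σf (k : ℕ) : Fin 2 ⊕ pidx k → pidx (k + 1)
  | Sum.inl ⟨0, _⟩ => Sum.inl ⟨(0 : Fin (k + 2)), zero_ne_last k⟩
  | Sum.inl ⟨1, _⟩ => Sum.inr (0 : Fin (k + 1))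
  | Sum.inl ⟨_ + 2, h⟩ => absurd h (by omega)
  | Sum.inr (Sum.inl v) => Sum.inl ⟨(v : Fin (k + 1)).succ, succ_ne_last v⟩
  | Sum.inr (Sum.inr e) => Sum.inr e.succ

@[simp] lemma σf_inl0 (k : ℕ) :
    σf k (Sum.inl 0) = Sum.inl ⟨(0 : Fin (k + 2)), zero_ne_last k⟩ := rfl

@[simp] lemma σf_inl1 (k : ℕ) : σf k (Sum.inl 1) = Sum.inr (0 : Fin (k + 1)) := rfl

@[simp] lemma σf_inrl (k : ℕ) (v : {v : Fin (k + 1) // v ≠ Fin.last k}) :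
    σf k (Sum.inr (Sum.inl v)) = Sum.inl ⟨(v : Fin (k + 1)).succ, succ_ne_last v⟩ := rfl

@[simp] lemma σf_inrr (k : ℕ) (e : Fin k) : σf k (Sum.inr (Sum.inr e)) = Sum.inr e.succ := rfl

lemma σf_bijective (k : ℕ) : Function.Bijective (σf k) := by
  constructor
  · rintro (⟨_ | _ | j1, hj1⟩ | (v1 | e1)) (⟨_ | _ | j2, hj2⟩ | (v2 | e2)) h <;>
      first
        | rfl
        | omega
        | (simp only [σf] at h;
           simp_all [Sum.inl.injEq, Sum.inr.injEq, Subtype.ext_iff, Fin.succ_inj]; done)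
        | (simp only [σf, Sum.inl.injEq, Sum.inr.injEq, Subtype.mk.injEq] at h;
           first
             | exact absurd h (Fin.succ_ne_zero _)
             | exact absurd h.symm (Fin.succ_ne_zero _))

  · rintro (⟨v, hv⟩ | e)
    · refine Fin.cases ?_ ?_ v hv
      · intro _; exact ⟨Sum.inl ⟨0, by omega⟩, rfl⟩
      · intro w hw
        have hwne : w ≠ Fin.last k := by
          intro hweq
          exact hw (by rw [hweq, Fin.succ_last])
        exact ⟨Sum.inr (Sum.inl ⟨w, hwne⟩), rfl⟩
    · refine Fin.cases ?_ ?_ e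
      · exact ⟨Sum.inl ⟨1, by omega⟩, rfl⟩
      · intro f; exact ⟨Sum.inr (Sum.inr f), rfl⟩

/-- the index equivalence -/
noncomputable def σe (k : ℕ) : (Fin 2 ⊕ pidx k) ≃ pidx (k + 1) :=
  Equiv.ofBijective _ (σf_bijective k)

/-- the coordinate-splitting map -/
def Φf (k : ℕ) : (pidx (k + 1) → ℝ) → (ℝ × ℝ) × (pidx k → ℝ) :=
  fun p => ((p (σf k (Sum.inl 0)), p (σf k (Sum.inl 1))), fun i => p (σf k (Sum.inr i)))

lemma Φf_linear (k : ℕ) : IsLinearMap ℝ (Φf k) :=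
  ⟨fun _ _ => rfl, fun _ _ => rfl⟩

/-- as measurable equiv -/
noncomputable def Φe (k : ℕ) : (pidx (k + 1) → ℝ) ≃ᵐ (ℝ × ℝ) × (pidx k → ℝ) :=
  ((MeasurableEquiv.piCongrLeft (fun _ => ℝ) (σe k)).symm).trans
    ((MeasurableEquiv.sumPiEquivProdPi (fun _ : Fin 2 ⊕ pidx k => ℝ)).trans
      (MeasurableEquiv.prodCongr (MeasurableEquiv.piFinTwo (fun _ => ℝ))
        (MeasurableEquiv.refl _)))

lemma Φe_coe (k : ℕ) : ⇑(Φe k) = Φf k := rfl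

lemma Φf_measurePreserving (k : ℕ) : MeasurePreserving (Φf k) volume volume := by
  rw [← Φe_coe]
  exact ((volume_preserving_piFinTwo (fun _ => ℝ)).prod (MeasurePreserving.id _)).comp
    ((volume_measurePreserving_sumPiEquivProdPi (fun _ : Fin 2 ⊕ pidx k => ℝ)).comp
      ((volume_measurePreserving_piCongrLeft (fun _ => ℝ) (σe k)).symm _))

lemma Φf_injective (k : ℕ) : Function.Injective (Φf k) := by
  rw [← Φe_coe]
  exact (Φe k).injective



lemma mem_pathGens_iff (n : ℕ) (p : pidx n → ℝ) :
    p ∈ pathGens n ↔ ∃ e : Fin n, ∃ a b c : ℝ,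
      ((a, b, c) = ((1 : ℝ), (1 : ℝ), (-1 : ℝ)) ∨
        (a, b, c) = (1, -1, 1) ∨ (a, b, c) = (-1, 1, 1)) ∧ p = gen n e a b c :=
  Iff.rfl

lemma Φf_gen_zero (k : ℕ) (a b c : ℝ) :
    Φf k (gen (k + 1) 0 a b c) = ((a, c), b • e0 k) := by
  refine Prod.ext (Prod.ext ?_ ?_) ?_
  · show gen (k + 1) 0 a b c (Sum.inl ⟨(0 : Fin (k + 2)), zero_ne_last k⟩) = a
    simp [gen, Fin.succ_ne_zero, (Fin.succ_ne_zero (0 : Fin (k+1))).symm]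
  · show gen (k + 1) 0 a b c (Sum.inr (0 : Fin (k + 1))) = c
    simp [gen]
  · funext i
    rcases i with v | f
    · show gen (k + 1) 0 a b c (Sum.inl ⟨(v : Fin (k + 1)).succ, succ_ne_last v⟩)
        = (b • e0 k) (Sum.inl v)
      simp only [gen, Sum.elim_inl, Pi.smul_apply, e0, smul_eq_mul]
      rw [Fin.castSucc_zero]
      rw [if_neg (Fin.succ_ne_zero _)]
      have hiff : ((v : Fin (k + 1)).succ = (0 : Fin (k + 1)).succ) ↔ ((v : Fin (k + 1)) = 0) :=
        Fin.succ_inj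
      by_cases hv : (v : Fin (k + 1)) = 0
      · rw [if_pos (hiff.mpr hv), if_pos hv]; ring
      · rw [if_neg (fun hc => hv (hiff.mp hc)), if_neg hv]; ring
    · show gen (k + 1) 0 a b c (Sum.inr f.succ) = (b • e0 k) (Sum.inr f)
      simp [gen, e0, Fin.succ_ne_zero]

lemma Φf_gen_succ (k : ℕ) (e : Fin k) (a b c : ℝ) :
    Φf k (gen (k + 1) e.succ a b c) = ((0, 0), gen k e a b c) := by
  have hcs : (e.succ : Fin (k + 1)).castSucc = (e.castSucc).succ := (Fin.succ_castSucc e).symm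
  refine Prod.ext (Prod.ext ?_ ?_) ?_
  · show gen (k + 1) e.succ a b c (Sum.inl ⟨(0 : Fin (k + 2)), zero_ne_last k⟩) = 0
    simp only [gen, Sum.elim_inl, hcs]
    rw [if_neg (Fin.succ_ne_zero _).symm, if_neg (Fin.succ_ne_zero _).symm]
    ring
  · show gen (k + 1) e.succ a b c (Sum.inr (0 : Fin (k + 1))) = 0
    simp [gen, (Fin.succ_ne_zero e).symm]
  · funext i
    rcases i with v | f
    · show gen (k + 1) e.succ a b c (Sum.inl ⟨(v : Fin (k + 1)).succ, succ_ne_last v⟩)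
        = gen k e a b c (Sum.inl v)
      simp only [gen, Sum.elim_inl, hcs]
      congr 1
      · by_cases hv : (v : Fin (k + 1)) = e.castSucc
        · rw [if_pos (by rw [hv]), if_pos hv]
        · rw [if_neg (fun hc => hv (Fin.succ_inj.mp hc)), if_neg hv]
      · by_cases hv : (v : Fin (k + 1)) = e.succ
        · rw [if_pos (by rw [hv]), if_pos hv]
        · rw [if_neg (fun hc => hv (Fin.succ_inj.mp hc)), if_neg hv]
    · show gen (k + 1) e.succ a b c (Sum.inr f.succ) = gen k e a b c (Sum.inr f)
      simp only [gen, Sum.elim_inr]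
      by_cases hf : f = e
      · rw [if_pos (by rw [hf]), if_pos hf]
      · rw [if_neg (fun hc => hf (Fin.succ_inj.mp hc)), if_neg hf]



lemma image_pathGens (k : ℕ) :
    Φf k '' pathGens (k + 1) = threePts (e0 k) ∪ inrL (pidx k → ℝ) '' pathGens k := by
  ext z
  constructor
  · rintro ⟨p, hp, rfl⟩
    obtain ⟨e, a, b, c, habc, rfl⟩ := (mem_pathGens_iff _ _).mp hp
    refine Fin.cases ?_ ?_ e
    · -- edge 0
      left
      rcases habc with h | h | h <;>
        · simp only [Prod.mk.injEq] at h
          obtain ⟨rfl, rfl, rfl⟩ := h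
          rw [Φf_gen_zero]
          simp [threePts]
    · -- edge succ
      intro e'
      right
      refine ⟨gen k e' a b c, ⟨e', a, b, c, habc, rfl⟩, ?_⟩
      rw [Φf_gen_succ]
      rfl
  · rintro (hz | ⟨x, hx, rfl⟩)
    · rcases hz with rfl | rfl | rfl
      · exact ⟨gen (k + 1) 0 1 1 (-1), ⟨0, 1, 1, -1, Or.inl rfl, rfl⟩,
          by rw [Φf_gen_zero, one_smul]⟩
      · exact ⟨gen (k + 1) 0 1 (-1) 1, ⟨0, 1, -1, 1, Or.inr (Or.inl rfl), rfl⟩,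
          by rw [Φf_gen_zero, neg_one_smul]⟩
      · exact ⟨gen (k + 1) 0 (-1) 1 1, ⟨0, -1, 1, 1, Or.inr (Or.inr rfl), rfl⟩,
          by rw [Φf_gen_zero, one_smul]⟩
    · obtain ⟨e, a, b, c, habc, rfl⟩ := (mem_pathGens_iff _ _).mp hx
      exact ⟨gen (k + 1) e.succ a b c, ⟨e.succ, a, b, c, habc, rfl⟩,
        by rw [Φf_gen_succ]; rfl⟩


lemma pathGens_eq_iUnion (n : ℕ) : pathGens n =
    ⋃ e : Fin n, {gen n e 1 1 (-1), gen n e 1 (-1) 1, gen n e (-1) 1 1} := by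
  ext p
  rw [mem_pathGens_iff, mem_iUnion]
  constructor
  · rintro ⟨e, a, b, c, h | h | h, rfl⟩ <;>
      · simp only [Prod.mk.injEq] at h
        obtain ⟨rfl, rfl, rfl⟩ := h
        exact ⟨e, by simp⟩
  · rintro ⟨e, he⟩
    rcases he with rfl | rfl | rfl
    · exact ⟨e, 1, 1, -1, Or.inl rfl, rfl⟩
    · exact ⟨e, 1, -1, 1, Or.inr (Or.inl rfl), rfl⟩
    · exact ⟨e, -1, 1, 1, Or.inr (Or.inr rfl), rfl⟩

lemma pathGens_finite (n : ℕ) : (pathGens n).Finite := by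
  rw [pathGens_eq_iUnion]
  exact Set.finite_iUnion (fun e => ((Set.finite_singleton _).insert _).insert _)

lemma pathGens_zero : pathGens 0 = ∅ := by
  ext p
  rw [mem_pathGens_iff]
  simp only [mem_empty_iff_false, iff_false]
  rintro ⟨e, -⟩
  exact e.elim0

lemma e0_mem_hull (j : ℕ) : e0 (j + 1) ∈ convexHull ℝ (pathGens (j + 1)) := by
  have h1 : gen (j + 1) 0 1 1 (-1) ∈ convexHull ℝ (pathGens (j + 1)) :=
    subset_convexHull ℝ _ ((mem_pathGens_iff _ _).mpr ⟨0, 1, 1, -1, Or.inl rfl, rfl⟩)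
  have h2 : gen (j + 1) 0 1 (-1) 1 ∈ convexHull ℝ (pathGens (j + 1)) :=
    subset_convexHull ℝ _ ((mem_pathGens_iff _ _).mpr ⟨0, 1, -1, 1, Or.inr (Or.inl rfl), rfl⟩)
  have hc := (convex_convexHull ℝ (pathGens (j + 1))) h1 h2
    (by norm_num : (0:ℝ) ≤ 1/2) (by norm_num : (0:ℝ) ≤ 1/2) (by norm_num)
  have heq : (1/2 : ℝ) • gen (j + 1) 0 1 1 (-1) + (1/2 : ℝ) • gen (j + 1) 0 1 (-1) 1
      = e0 (j + 1) := by
    funext i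
    rcases i with v | f
    · show (1/2 : ℝ) * _ + (1/2 : ℝ) * _ = _
      simp only [gen, Sum.elim_inl, e0]
      rw [Fin.castSucc_zero]
      split_ifs <;> norm_num
    · show (1/2 : ℝ) * _ + (1/2 : ℝ) * _ = _
      simp only [gen, Sum.elim_inr, e0]
      split_ifs <;> norm_num
  rwa [heq] at hc

lemma card_pidx (n : ℕ) : Fintype.card (pidx n) = 2 * n := by
  rw [Fintype.card_sum]
  have h1 : Fintype.card {v : Fin (n + 1) // v ≠ Fin.last n} = n := by
    rw [Fintype.card_subtype_compl, Fintype.card_subtype_eq, Fintype.card_fin]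
    omega
  rw [h1, Fintype.card_fin]
  ring


section Assembly

lemma vol_key (k : ℕ) (X : Set (pidx k → ℝ)) (hXfin : X.Finite)
    (he : e0 k ∈ convexHull ℝ X)
    (himg : convexHull ℝ (Φf k '' pathGens (k + 1)) =
      convexHull ℝ (threePts (e0 k) ∪ inrL (pidx k → ℝ) '' X)) :
    volume (convexHull ℝ (pathGens (k + 1))) =
      ENNReal.ofReal (4 / ((2 * k + 1) * (2 * k + 2))) * volume (convexHull ℝ X) := by
  have hlin := Φf_linear k
  have himg2 : Φf k '' convexHull ℝ (pathGens (k + 1)) = modelSet X (e0 k) := by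
    rw [hlin.image_convexHull, himg, hull_eq_modelSet X _ he]
  have hGfin : (threePts (e0 k) ∪ inrL (pidx k → ℝ) '' X).Finite :=
    (((Set.finite_singleton _).insert _).insert _).union (hXfin.image _)
  have hScomp : IsCompact (modelSet X (e0 k)) :=
    (hull_eq_modelSet X _ he) ▸ hGfin.isCompact_convexHull (𝕜 := ℝ)
  have hSmeas : MeasurableSet (modelSet X (e0 k)) := hScomp.isClosed.measurableSet
  have step : volume (convexHull ℝ (pathGens (k + 1))) = volume (modelSet X (e0 k)) := by
    conv_lhs => rw [← (Φf_injective k).preimage_image (convexHull ℝ (pathGens (k + 1))), himg2]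
    exact (Φf_measurePreserving k).measure_preimage hSmeas.nullMeasurableSet
  rw [step, volume_modelSet X (e0 k) hXfin he, card_pidx]
  congr 2
  push_cast
  ring

lemma isEmpty_pidx0 : IsEmpty (pidx 0) := by
  constructor
  rintro (⟨v, hv⟩ | f)
  · exact hv (Fin.ext (by omega))
  · exact f.elim0

lemma vol_hull : ∀ n : ℕ, 1 ≤ n → volume (convexHull ℝ (pathGens n)) =
    ENNReal.ofReal (4 ^ n / (Nat.factorial (2 * n))) := by
  intro n hn
  induction n with
  | zero => omega
  | succ k ih =>
    rcases Nat.eq_zero_or_pos k with rfl | hk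
    · -- base case n = 1
      haveI : IsEmpty (pidx 0) := isEmpty_pidx0
      have he00 : e0 0 = 0 := funext fun i => (isEmpty_pidx0.false i).elim
      have he : e0 0 ∈ convexHull ℝ ({0} : Set (pidx 0 → ℝ)) := by
        rw [convexHull_singleton, he00]; exact rfl
      have hzero_mem : (0 : (ℝ × ℝ) × (pidx 0 → ℝ)) ∈ convexHull ℝ (threePts (e0 0)) := by
        have h1 : (((1 : ℝ), (-1 : ℝ)), e0 0) ∈ convexHull ℝ (threePts (e0 0)) :=
          subset_convexHull ℝ _ (by simp [threePts])
        have h3 : (((-1 : ℝ), (1 : ℝ)), e0 0) ∈ convexHull ℝ (threePts (e0 0)) :=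
          subset_convexHull ℝ _ (by simp [threePts])
        have hc := (convex_convexHull ℝ (threePts (e0 0))) h1 h3
          (by norm_num : (0:ℝ) ≤ 1/2) (by norm_num : (0:ℝ) ≤ 1/2) (by norm_num)
        have heq : (1/2 : ℝ) • ((((1 : ℝ), (-1 : ℝ)), e0 0)) +
            (1/2 : ℝ) • ((((-1 : ℝ), (1 : ℝ)), e0 0)) = (0 : (ℝ × ℝ) × (pidx 0 → ℝ)) := by
          rw [he00]
          refine Prod.ext (Prod.ext ?_ ?_) ?_ <;> simp
        rwa [heq] at hc
      have himg2 : convexHull ℝ (Φf 0 '' pathGens 1) =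
          convexHull ℝ (threePts (e0 0) ∪ inrL (pidx 0 → ℝ) '' ({0} : Set (pidx 0 → ℝ))) := by
        rw [image_pathGens, pathGens_zero]
        simp only [Set.image_empty, Set.union_empty, Set.image_singleton, map_zero]
        apply Subset.antisymm (convexHull_mono subset_union_left)
        apply convexHull_min _ (convex_convexHull ℝ _)
        rintro z (hz | hz)
        · exact subset_convexHull ℝ _ hz
        · rw [mem_singleton_iff] at hz
          rw [hz]
          exact hzero_mem
      have hvol := vol_key 0 ({0} : Set (pidx 0 → ℝ)) (Set.finite_singleton _) he himg2
      rw [hvol, convexHull_singleton]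
      have hsing : ({0} : Set (pidx 0 → ℝ)) = univ := by
        apply Set.eq_univ_of_forall
        intro x
        rw [mem_singleton_iff]
        exact Subsingleton.elim x 0
      rw [hsing]
      have huniv : volume (univ : Set (pidx 0 → ℝ)) = 1 := by
        rw [volume_pi, Measure.pi_univ]
        simp
      rw [huniv, mul_one]
      norm_num [Nat.factorial]
    · -- inductive step, k ≥ 1
      obtain ⟨j, rfl⟩ : ∃ j, k = j + 1 := ⟨k - 1, by omega⟩
      have ih' := ih (by omega)
      have himg2 : convexHull ℝ (Φf (j + 1) '' pathGens (j + 2)) =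
          convexHull ℝ (threePts (e0 (j + 1)) ∪
            inrL (pidx (j + 1) → ℝ) '' pathGens (j + 1)) := by
        rw [image_pathGens]
      have hvol := vol_key (j + 1) (pathGens (j + 1)) (pathGens_finite _) (e0_mem_hull j) himg2
      rw [hvol, ih', ← ENNReal.ofReal_mul (by positivity)]
      congr 1
      have h1 : (Nat.factorial (2 * (j + 1)) : ℝ) ≠ 0 := by
        exact_mod_cast Nat.factorial_ne_zero _
      have hfact : (2 * (j + 2)) = (2 * (j + 1) + 1) + 1 := by ring
      rw [hfact, Nat.factorial_succ, Nat.factorial_succ]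
      push_cast
      have h2 : (2 * ((j : ℝ) + 1) + 1) ≠ 0 := by positivity
      have h3 : (2 * ((j : ℝ) + 1) + 2) ≠ 0 := by positivity
      field_simp
      ring

end Assembly

/-- The normalized volume of the cosmological polytope of the path with n edges
(a lattice polytope of dimension 2n) equals 4^n. -/
theorem stmt_14 (n : ℕ) (hn : 1 ≤ n) :
    (Nat.factorial (2 * n) : ℝ≥0∞) *
      volume (convexHull ℝ (pathGens n)) = 4 ^ n := by
  rw [vol_hull n hn, ← ENNReal.ofReal_natCast (Nat.factorial (2 * n)),
    ← ENNReal.ofReal_mul (by positivity)]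
  have h1 : ((Nat.factorial (2 * n) : ℝ)) * (4 ^ n / (Nat.factorial (2 * n))) = 4 ^ n := by
    rw [mul_div_cancel₀]
    exact_mod_cast Nat.factorial_ne_zero _
  rw [h1, ENNReal.ofReal_pow (by norm_num : (0:ℝ) ≤ 4)]
  norm_num
end
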